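/- arXiv:math-ph/9901001 — 2 statements merged into one kernel-verified Lean document; each statement's English description precedes it below -/
import Mathlib

section
/- If N is a positive integer and c is an integer with c \not\equiv 0 mod N, then for any integer d, |G(c,d;N)| \le \sqrt{N \cdot gcd(2c, N)}. -/
/-!
Expanding `|G|² = G · conj G` and substituting `x = y + u` turns the double sum into
`∑ᵤ ψ(cu² + du) ∑_y ψ(2cuy)`; the inner sum vanishes unless `2cu = 0` in `ℤ/N`, when it is `N`.
Hence `|G|² ≤ N · #{u : ZMod N | 2cu = 0} = N · gcd(2c, N)`.
-/

open Finset

namespace AddChar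

variable {R K : Type*} [CommRing R] [Fintype R] [RCLike K]

theorem mul_conj_sum_quadratic (ψ : AddChar R K) (a b : R) :
    (∑ x, ψ (a * x ^ 2 + b * x)) * starRingEnd K (∑ x, ψ (a * x ^ 2 + b * x)) =
      ∑ u, ψ (a * u ^ 2 + b * u) * ∑ y, ψ (y * (2 * a * u)) := by
  set q : R → R := fun x => a * x ^ 2 + b * x
  calc (∑ x, ψ (q x)) * starRingEnd K (∑ x, ψ (q x))
      = ∑ y, ∑ x, ψ (q x - q y) := by
        simp_rw [map_sum, sum_mul_sum, ← map_neg_eq_conj, ← map_add_eq_mul, ← sub_eq_add_neg]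
        exact sum_comm
    _ = ∑ y, ∑ u, ψ (q u) * ψ (y * (2 * a * u)) := by
        refine Fintype.sum_congr _ _ fun y => ?_
        rw [← Equiv.sum_comp (Equiv.addRight y)]
        refine Fintype.sum_congr _ _ fun u => ?_
        rw [← map_add_eq_mul]
        congr 1
        simp only [q, Equiv.coe_addRight]
        ring
    _ = ∑ u, ψ (q u) * ∑ y, ψ (y * (2 * a * u)) := by
        rw [sum_comm]
        simp_rw [mul_sum]

theorem norm_sum_quadratic_sq_le [DecidableEq R] {ψ : AddChar R K} (hψ : ψ.IsPrimitive)
    (a b : R) :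
    ‖∑ x, ψ (a * x ^ 2 + b * x)‖ ^ 2 ≤ Fintype.card R * #{u | 2 * a * u = 0} := by
  have hS := mul_conj_sum_quadratic ψ a b
  rw [RCLike.mul_conj] at hS
  calc ‖∑ x, ψ (a * x ^ 2 + b * x)‖ ^ 2
      = ‖∑ u, ψ (a * u ^ 2 + b * u) * ∑ y, ψ (y * (2 * a * u))‖ := by
        rw [← hS]; norm_cast; simp
    _ ≤ ∑ u, ‖ψ (a * u ^ 2 + b * u) * ∑ y, ψ (y * (2 * a * u))‖ := norm_sum_le _ _
    _ = ∑ u, if 2 * a * u = 0 then (Fintype.card R : ℝ) else 0 := by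
        refine Fintype.sum_congr _ _ fun u => ?_
        rw [norm_mul, norm_apply, one_mul, sum_mulShift _ hψ]
        split_ifs <;> simp
    _ = Fintype.card R * #{u | 2 * a * u = 0} := by
        rw [sum_ite, sum_const_zero, add_zero, sum_const, nsmul_eq_mul, mul_comm]

end AddChar

theorem ZMod.sum_range_natCast (N : ℕ) [NeZero N] {M : Type*} [AddCommMonoid M]
    (f : ZMod N → M) :
    ∑ t ∈ range N, f t = ∑ x, f x :=
  sum_nbij' (↑) ZMod.val (by simp) (by simp [ZMod.val_lt])
    (fun t ht => ZMod.val_cast_of_lt (mem_range.1 ht)) (fun x _ => ZMod.natCast_zmod_val x)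
    (fun _ _ => rfl)

theorem ZMod.card_intCast_mul_eq_zero (N : ℕ) [NeZero N] (a : ℤ) :
    #{u : ZMod N | (a : ZMod N) * u = 0} = Int.gcd a N := by
  have hker := IsAddCyclic.card_nsmulAddMonoidHom_ker (ZMod N) a.natAbs
  rw [Nat.card_zmod, Nat.gcd_comm] at hker
  rw [Int.gcd, Int.natAbs_natCast, ← hker, Nat.card_eq_fintype_card, ← Fintype.card_subtype]
  refine Fintype.card_congr (Equiv.subtypeEquivRight fun u => ?_)
  rw [AddMonoidHom.mem_ker, nsmulAddMonoidHom_apply, nsmul_eq_mul]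
  rcases Int.natAbs_eq a with ha | ha <;> rw [ha] <;> simp

theorem abs_gauss_sum_le_general (N : ℕ) (hN : 0 < N) (c d : ℤ) :
    ‖∑ t ∈ Finset.range N,
      Complex.exp (2 * Real.pi * Complex.I *
        ((c : ℂ) * (t : ℂ) ^ 2 + (d : ℂ) * (t : ℂ)) / (N : ℂ))‖ ≤
    Real.sqrt ((N : ℝ) * (Int.gcd (2 * c) (N : ℤ) : ℝ)) := by
  have : NeZero N := ⟨hN.ne'⟩
  have hG : ∑ t ∈ range N, Complex.exp (2 * Real.pi * Complex.I *
        ((c : ℂ) * (t : ℂ) ^ 2 + (d : ℂ) * (t : ℂ)) / (N : ℂ)) =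
      ∑ x : ZMod N, ZMod.stdAddChar ((c : ZMod N) * x ^ 2 + (d : ZMod N) * x) := by
    rw [← ZMod.sum_range_natCast]
    refine sum_congr rfl fun t _ => ?_
    have := ZMod.stdAddChar_coe (N := N) (c * t ^ 2 + d * t)
    push_cast at this
    exact this.symm
  have hbound :=
    AddChar.norm_sum_quadratic_sq_le (ZMod.isPrimitive_stdAddChar N) (c : ZMod N) (d : ZMod N)
  rw [ZMod.card, ← Int.cast_two, ← Int.cast_mul, ZMod.card_intCast_mul_eq_zero] at hbound
  rw [hG]
  exact Real.le_sqrt_of_sq_le (by exact_mod_cast hbound)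

/-- If `N ≥ 1` and `c ≢ 0 mod N`, then for any integer `d`,
`|G(c,d;N)| ≤ √(N · gcd(2c, N))`. -/
theorem abs_gauss_sum_le (N : ℕ) (hN : 0 < N) (c d : ℤ)
    (h : ¬ ((N : ℤ) ∣ c)) :
    ‖∑ t ∈ Finset.range N,
      Complex.exp (2 * Real.pi * Complex.I *
        ((c : ℂ) * (t : ℂ) ^ 2 + (d : ℂ) * (t : ℂ)) / (N : ℂ))‖ ≤
    Real.sqrt ((N : ℝ) * (Int.gcd (2 * c) (N : ℤ) : ℝ)) :=
  abs_gauss_sum_le_general N hN c d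
end

section
/- With notation as in the eigenfunction construction for V_{a,N} (D = gcd(a,N), M = N/D), the N functions \psi_{\eta,l} for \eta \in {1,...,D}, l \in {0,...,M-1} form an orthonormal basis of L^2(Z_N): \langle \psi_{\eta,l}, \psi_{\eta',l'} \rangle = 1 if (\eta,l)=(\eta',l') and 0 otherwise. -/
/-!
The support points `η + ν a` (`1 ≤ η ≤ D`, `ν < M`) are `N` distinct residues mod `N`:
reducing mod `D`, which divides both `a` and `N`, recovers `η`, and multiplication by `a` is
injective on residues mod `N / gcd(a, N) = M`, which recovers `ν`. Hence `ψ_{η,l}` and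
`ψ_{η',l'}` have disjoint supports unless `η = η'`, and for `η = η'` the inner product is
`(D / N) ∑_{ν < M} ζ^{ν (l' - l)}` with `ζ = e^{2πi/M}`, a full sum of `M`-th roots of unity.
-/

/-- The eigenfunction `ψ_{η,l}` of `V_{a,N}` (see the paper): supported on residues
`P ≡ η + ν a (mod N)`, `ν ∈ {0,…,M-1}`, vanishing for `P ≢ η mod D`. -/
noncomputable def eigfun (N : ℕ) (a : ℤ) (D M η l : ℕ) : ZMod N → ℂ :=
  fun P => (Real.sqrt D : ℂ) * ∑ ν ∈ Finset.range M,
    if P = (η : ZMod N) + (ν : ZMod N) * (a : ZMod N) then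
      Complex.exp (2 * Real.pi * Complex.I *
        (-((η : ℂ) * (a : ℂ) * (ν : ℂ) ^ 2) - (ν : ℂ) * (l : ℂ) * (D : ℂ) +
          (a : ℂ) ^ 2 * (ν : ℂ) *
            (((M : ℂ) - 1) * (2 * (M : ℂ) - 1) - ((ν : ℂ) - 1) * (2 * (ν : ℂ) - 1)) / 6)
        / (N : ℂ))
    else 0

open Finset Complex

theorem sum_ite_mul_conj_sum_ite {α ι κ R : Type*} [Fintype α] [DecidableEq α]
    [CommSemiring R] [StarRing R] (s : Finset ι) (t : Finset κ) (p : ι → α) (q : κ → α)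
    (c : ι → R) (d : κ → R) :
    ∑ x, (∑ i ∈ s, if x = p i then c i else 0) *
        starRingEnd R (∑ j ∈ t, if x = q j then d j else 0) =
      ∑ i ∈ s, ∑ j ∈ t, if p i = q j then c i * starRingEnd R (d j) else 0 := by
  simp only [map_sum, sum_mul_sum, apply_ite (starRingEnd R), map_zero, ite_zero_mul_ite_zero]
  rw [sum_comm]
  refine sum_congr rfl fun i _ => ?_
  rw [sum_comm]
  refine sum_congr rfl fun j _ => ?_
  simp only [ite_and, Fintype.sum_ite_eq']

theorem natCast_eq_of_add_mul_intCast_eq {N d : ℕ} {a : ℤ} (hdN : d ∣ N) (hda : (d : ℤ) ∣ a)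
    {x x' ν ν' : ℕ} (h : (x : ZMod N) + ν * a = x' + ν' * a) : (x : ZMod d) = x' := by
  have ha : (a : ZMod d) = 0 := (ZMod.intCast_zmod_eq_zero_iff_dvd a d).mpr hda
  simpa only [map_add, map_mul, map_natCast, map_intCast, ha, mul_zero, add_zero]
    using congrArg (ZMod.castHom hdN (ZMod d)) h

theorem eq_of_natCast_eq_of_mem_Icc {d x x' : ℕ} (h : (x : ZMod d) = x')
    (hx : x ∈ Icc 1 d) (hx' : x' ∈ Icc 1 d) : x = x' := by
  rw [mem_Icc] at hx hx'
  rw [ZMod.natCast_eq_natCast_iff] at h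
  exact h.eq_of_abs_lt (by rw [abs_lt]; omega)

theorem eq_of_natCast_mul_intCast_eq {N : ℕ} {a : ℤ} {ν ν' : ℕ}
    (hν : ν < N / Int.gcd a N) (hν' : ν' < N / Int.gcd a N)
    (h : (ν : ZMod N) * a = ν' * a) : ν = ν' := by
  have hN : 0 < N := Nat.pos_of_ne_zero (by rintro rfl; simp at hν)
  have hmod : (ν : ℤ) * a ≡ ν' * a [ZMOD N] := by
    rw [← ZMod.intCast_eq_intCast_iff]; push_cast; exact h
  have hcancel := hmod.cancel_right_div_gcd (Int.natCast_pos.mpr hN)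
  rw [Int.gcd_comm, ← Int.natCast_div, Int.natCast_modEq_iff] at hcancel
  exact hcancel.eq_of_lt_of_lt hν hν'

theorem sum_range_exp_pow {M : ℕ} (hM : M ≠ 0) (k : ℤ) :
    ∑ ν ∈ range M, exp (2 * Real.pi * I * k / M) ^ ν = if (M : ℤ) ∣ k then (M : ℂ) else 0 := by
  have hζ := isPrimitiveRoot_exp M hM
  have hexp : exp (2 * Real.pi * I * k / M) = exp (2 * Real.pi * I / M) ^ k := by
    rw [← exp_int_mul]; ring_nf
  rw [hexp]
  split_ifs with hk
  · simp [(hζ.zpow_eq_one_iff_dvd k).mpr hk]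
  · have hpow : (exp (2 * Real.pi * I / M) ^ k) ^ M = 1 := by
      rw [← zpow_natCast, ← zpow_mul, mul_comm k, zpow_mul, zpow_natCast, hζ.pow_eq_one, one_zpow]
    rw [geom_sum_eq ((hζ.zpow_eq_one_iff_dvd k).not.mpr hk), hpow, sub_self, zero_div]

def eigfunPoint (N : ℕ) (a : ℤ) (η ν : ℕ) : ZMod N := (η : ZMod N) + (ν : ZMod N) * (a : ZMod N)

noncomputable def eigfunPhase (N : ℕ) (a : ℤ) (D M η l ν : ℕ) : ℂ :=
  exp (2 * Real.pi * I *
    (-((η : ℂ) * (a : ℂ) * (ν : ℂ) ^ 2) - (ν : ℂ) * (l : ℂ) * (D : ℂ) +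
      (a : ℂ) ^ 2 * (ν : ℂ) *
        (((M : ℂ) - 1) * (2 * (M : ℂ) - 1) - ((ν : ℂ) - 1) * (2 * (ν : ℂ) - 1)) / 6)
    / (N : ℂ))

theorem eigfun_apply (N : ℕ) (a : ℤ) (D M η l : ℕ) (P : ZMod N) :
    eigfun N a D M η l P = (Real.sqrt D : ℂ) * ∑ ν ∈ range M,
      if P = eigfunPoint N a η ν then eigfunPhase N a D M η l ν else 0 := rfl

theorem eigfunPoint_eq_iff {N : ℕ} {a : ℤ} {D M η η' ν ν' : ℕ}
    (hD : D = Int.gcd a N) (hM : M = N / D) (hη : η ∈ Icc 1 D) (hη' : η' ∈ Icc 1 D)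
    (hν : ν < M) (hν' : ν' < M) :
    eigfunPoint N a η ν = eigfunPoint N a η' ν' ↔ η = η' ∧ ν = ν' := by
  subst hD hM
  refine ⟨fun h => ?_, fun ⟨rfl, rfl⟩ => rfl⟩
  have hgcd_dvd : Int.gcd a N ∣ N := by exact_mod_cast Int.gcd_dvd_right a N
  obtain rfl : η = η' := eq_of_natCast_eq_of_mem_Icc
    (natCast_eq_of_add_mul_intCast_eq hgcd_dvd (Int.gcd_dvd_left a N) h) hη hη'
  exact ⟨rfl, eq_of_natCast_mul_intCast_eq hν hν' (add_left_cancel h)⟩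

theorem eigfunPhase_mul_conj {N D M : ℕ} (hN : N = D * M) (hD : D ≠ 0)
    (a : ℤ) (η l l' ν : ℕ) :
    eigfunPhase N a D M η l ν * starRingEnd ℂ (eigfunPhase N a D M η l' ν) =
      exp (2 * Real.pi * I * ((l' - l : ℤ) : ℂ) / M) ^ ν := by
  -- The phase terms not involving `l` are real multiples of `2πi / N`, so they cancel.
  rw [eigfunPhase, eigfunPhase, ← exp_conj, ← exp_add, ← exp_nat_mul]
  congr 1
  simp only [map_div₀, map_mul, map_add, map_sub, map_neg, map_pow, conj_I, map_ofNat,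
    conj_ofReal, map_natCast, map_intCast, map_one]
  rw [hN]
  push_cast
  field_simp
  ring

theorem sum_eigfun_mul_conj {N : ℕ} [NeZero N] {a : ℤ} {D M η η' : ℕ} (hD : D = Int.gcd a N)
    (hM : M = N / D) (hη : η ∈ Icc 1 D) (hη' : η' ∈ Icc 1 D) (l l' : ℕ) :
    ∑ P : ZMod N, eigfun N a D M η l P * starRingEnd ℂ (eigfun N a D M η' l' P) =
      D * if η = η' then ∑ ν ∈ range M,
        eigfunPhase N a D M η l ν * starRingEnd ℂ (eigfunPhase N a D M η l' ν) else 0 := by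
  simp only [eigfun_apply, map_mul, conj_ofReal, mul_mul_mul_comm, ← ofReal_mul,
    Real.mul_self_sqrt (Nat.cast_nonneg D), ofReal_natCast, ← mul_sum, sum_ite_mul_conj_sum_ite]
  congr 1
  calc _ = ∑ ν ∈ range M, ∑ ν' ∈ range M, if η = η' ∧ ν = ν' then
        eigfunPhase N a D M η l ν * starRingEnd ℂ (eigfunPhase N a D M η' l' ν') else 0 :=
        sum_congr rfl fun ν hν => sum_congr rfl fun ν' hν' => if_congr
          (eigfunPoint_eq_iff hD hM hη hη' (mem_range.mp hν) (mem_range.mp hν')) rfl rfl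
    _ = _ := by
      split_ifs with h
      · subst h
        exact sum_congr rfl fun ν hν => by simp [hν]
      · simp [h]

theorem sum_eigfunPhase_mul_conj {N D M : ℕ} (hN : N = D * M) (hD : D ≠ 0) (a : ℤ)
    (η : ℕ) {l l' : ℕ} (hl : l < M) (hl' : l' < M) :
    ∑ ν ∈ range M, eigfunPhase N a D M η l ν * starRingEnd ℂ (eigfunPhase N a D M η l' ν) =
      if l = l' then (M : ℂ) else 0 := by
  simp only [eigfunPhase_mul_conj hN hD, sum_range_exp_pow (Nat.ne_zero_of_lt hl)]
  refine if_congr ⟨fun h => ?_, by rintro rfl; simp⟩ rfl rfl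
  exact (Int.natCast_modEq_iff.mp (Int.modEq_iff_dvd.mpr h)).eq_of_lt_of_lt hl hl'

/-- The `N` functions `ψ_{η,l}`, `η ∈ {1,…,D}`, `l ∈ {0,…,M-1}`,
form an orthonormal system (hence a basis, there being `N = DM` of them) in
`L²(ℤ_N)` with inner product `⟨φ,ψ⟩ = (1/N)∑_Q φ(Q) conj(ψ(Q))`. -/
theorem eigfun_orthonormal (N : ℕ) [NeZero N] (a : ℤ)
    (D M : ℕ) (hD : D = Int.gcd a (N : ℤ)) (hM : M = N / D)
    (η η' : ℕ) (hη : η ∈ Finset.Icc 1 D) (hη' : η' ∈ Finset.Icc 1 D)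
    (l l' : ℕ) (hl : l < M) (hl' : l' < M) :
    (1 / (N : ℂ)) * ∑ P : ZMod N,
        eigfun N a D M η l P * (starRingEnd ℂ) (eigfun N a D M η' l' P) =
    if (η, l) = (η', l') then 1 else 0 := by
  have hDN : D ∣ N := by rw [hD]; exact_mod_cast Int.gcd_dvd_right a N
  have hNDM : N = D * M := by rw [hM, Nat.mul_div_cancel' hDN]
  have hD0 : D ≠ 0 := by rintro rfl; exact NeZero.ne N (by simpa using hNDM)
  rw [sum_eigfun_mul_conj hD hM hη hη', sum_eigfunPhase_mul_conj hNDM hD0 a η hl hl']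
  have hM0 : M ≠ 0 := Nat.ne_zero_of_lt hl
  have hnorm : (N : ℂ)⁻¹ * (D * M) = 1 := by rw [hNDM]; push_cast; field_simp
  by_cases hηη : η = η' <;> by_cases hll : l = l' <;> simp [hηη, hll, hnorm]
end
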